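/- With the sequence $(a_n)$ defined by $a_n = \sup\{r \ge 0 : F(r) \le (2R)^{2n}\}$ for a doubling measure $\tilde\nu$ with constant $R$ (and $F(r)=\tilde\nu[0,r)$), one has $a_{n+1} \ge 2 a_n$ for all $n$, and hence $(a_{n+1}-a_n)/a_{n+1} \ge 1/2$. -/

import Mathlib

open MeasureTheory Set

/-!
Doubling gives `ν[0, 2aₙ) ≤ R · ν[0, aₙ) ≤ R (2R)^{2n} ≤ (2R)^{2(n+1)}`, so `2aₙ` lies in the set
whose supremum is `aₙ₊₁`; that set is bounded above because `ν[0, t) → ∞`.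
-/

open Filter in
theorem bddAbove_setOf_le_of_tendsto_top {α β : Type*} [LinearOrder α] [Nonempty α]
    [LinearOrder β] [OrderTop β] [TopologicalSpace β] [OrderTopology β]
    {f : α → β} (hf : Tendsto f atTop (nhds ⊤)) {M : β} (hM : M < ⊤) :
    BddAbove {r | f r ≤ M} := by
  obtain ⟨T, hT⟩ := eventually_atTop.mp (hf.eventually (eventually_gt_nhds hM))
  exact ⟨T, fun r hr => le_of_not_ge fun hTr => (hT r hTr).not_ge hr⟩

namespace ENNReal

theorem zpow_two_mul_add_one {q : ENNReal} (hq₀ : q ≠ 0) (hqt : q ≠ ⊤) (n : ℤ) :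
    q ^ (2 * (n + 1)) = q ^ 2 * q ^ (2 * n) := by
  rw [show 2 * (n + 1) = 2 + 2 * n by ring, ENNReal.zpow_add hq₀ hqt, zpow_ofNat]

theorem coe_le_two_mul_sq {R : NNReal} (hR : 1 ≤ R) : (R : ENNReal) ≤ (2 * R) ^ 2 := by
  have h : (R : ENNReal) ≤ 2 * R := le_mul_of_one_le_left zero_le one_le_two
  calc (R : ENNReal) = R * 1 := (mul_one _).symm
    _ ≤ (2 * R) * (2 * R) := mul_le_mul' h (le_trans (by exact_mod_cast hR) h)
    _ = (2 * R) ^ 2 := (sq _).symm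

end ENNReal

theorem an_growth_general (ν : Measure ℝ) (R : NNReal) (hR : 1 ≤ R)
    (hdb : ∀ t : ℝ, 0 < t → ν (Ico 0 (2 * t)) ≤ (R : ENNReal) * ν (Ico 0 t))
    (htop : Filter.Tendsto (fun t : ℝ => ν (Ico 0 t)) Filter.atTop (nhds ⊤))
    (a : ℤ → ℝ)
    (ha : ∀ n : ℤ, a n = sSup {r : ℝ | 0 ≤ r ∧ ν (Ico 0 r) ≤ (2 * (R : ENNReal)) ^ (2 * n)})
    (hapos : ∀ n : ℤ, 0 < a n)
    (hbound : ∀ n : ℤ, ν (Ico 0 (a n)) ≤ (2 * (R : ENNReal)) ^ (2 * n) ∧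
      (2 * (R : ENNReal)) ^ (2 * n) / (R : ENNReal) ≤ ν (Ico 0 (a n))) :
    ∀ n : ℤ, 2 * a n ≤ a (n + 1) ∧ (1 : ℝ) / 2 ≤ (a (n + 1) - a n) / a (n + 1) := by
  intro n
  have hq₀ : 2 * (R : ENNReal) ≠ 0 :=
    mul_ne_zero two_ne_zero (ENNReal.coe_ne_zero.mpr (zero_lt_one.trans_le hR).ne')
  have hqt : 2 * (R : ENNReal) ≠ ⊤ := ENNReal.mul_ne_top ENNReal.ofNat_ne_top ENNReal.coe_ne_top
  have hdouble : ν (Ico 0 (2 * a n)) ≤ (2 * (R : ENNReal)) ^ (2 * (n + 1)) :=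
    calc ν (Ico 0 (2 * a n)) ≤ R * ν (Ico 0 (a n)) := hdb _ (hapos n)
      _ ≤ (2 * R) ^ 2 * (2 * (R : ENNReal)) ^ (2 * n) :=
        mul_le_mul' (ENNReal.coe_le_two_mul_sq hR) (hbound n).1
      _ = (2 * (R : ENNReal)) ^ (2 * (n + 1)) := (ENNReal.zpow_two_mul_add_one hq₀ hqt n).symm
  have hbdd : BddAbove {r : ℝ | 0 ≤ r ∧ ν (Ico 0 r) ≤ (2 * (R : ENNReal)) ^ (2 * (n + 1))} :=
    (bddAbove_setOf_le_of_tendsto_top htop (ENNReal.zpow_lt_top hq₀ hqt _)).mono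
      fun _ hr => hr.2
  have hgrowth : 2 * a n ≤ a (n + 1) :=
    ha (n + 1) ▸ le_csSup hbdd ⟨by linarith [hapos n], hdouble⟩
  refine ⟨hgrowth, ?_⟩
  rw [le_div_iff₀ (hapos (n + 1))]
  linarith

/-- For a doubling measure `ν` with constant `R`, the sequence
`a_n = sup { r ≥ 0 : ν[0,r) ≤ (2R)^(2n) }` satisfies `a_{n+1} ≥ 2 a_n`, and hence
`(a_{n+1} - a_n)/a_{n+1} ≥ 1/2`. -/
theorem an_growth (ν : Measure ℝ) (R : NNReal) (hR : 1 ≤ R)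
    (hdb : ∀ t : ℝ, 0 < t → ν (Ico 0 (2 * t)) ≤ (R : ENNReal) * ν (Ico 0 t))
    (hfin : ∀ t : ℝ, ν (Ico 0 t) < ⊤)
    (h0 : ν {0} = 0)
    (hpos : ∀ t : ℝ, 0 < t → 0 < ν (Ico 0 t))
    (htop : Filter.Tendsto (fun t : ℝ => ν (Ico 0 t)) Filter.atTop (nhds ⊤))
    (a : ℤ → ℝ)
    (ha : ∀ n : ℤ, a n = sSup {r : ℝ | 0 ≤ r ∧ ν (Ico 0 r) ≤ (2 * (R : ENNReal)) ^ (2 * n)})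
    (hapos : ∀ n : ℤ, 0 < a n)
    (hbound : ∀ n : ℤ, ν (Ico 0 (a n)) ≤ (2 * (R : ENNReal)) ^ (2 * n) ∧
      (2 * (R : ENNReal)) ^ (2 * n) / (R : ENNReal) ≤ ν (Ico 0 (a n))) :
    ∀ n : ℤ, 2 * a n ≤ a (n + 1) ∧ (1 : ℝ) / 2 ≤ (a (n + 1) - a n) / a (n + 1) :=
  an_growth_general ν R hR hdb htop a ha hapos hbound
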